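/- (i) For every u ∈ C²[0,1] with u(0) = u'(0) = 0 and every ε > 0, there exists ũ ∈ C^∞[0,1] with supp(ũ) ⊂ (0,1] such that ∫₀¹ |u'(ρ) − ũ'(ρ)|²/ρ² dρ < ε². (ii) For every u ∈ C¹[0,1] with u(0) = 0 and every ε > 0, there exists ũ ∈ C^∞[0,1] with supp(ũ) ⊂ (0,1] such that ∫₀¹ |u'(ρ) − ũ'(ρ)|² dρ < ε². -/

import Mathlib

open MeasureTheory

/-- One-sided derivative on `[0,1]`. -/
noncomputable def dI (f : ℝ → ℂ) (ρ : ℝ) : ℂ := derivWithin f (Set.Icc 0 1) ρ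

/-!
Only derivatives enter, so it suffices to find a smooth `g` vanishing near `0` that is close to
`u'` and to take for `ũ` its primitive. In case (ii) `g` is `L²`-close to `u'`; in
case (i) `g = ρ k` with `k` `L²`-close to `u'/ρ`, which is bounded because `u'(0) = 0`. For a
bounded `h` continuous on `(0,1]`, `k` is a smooth uniform approximation of `h` on `[δ,1]`
multiplied by a smooth cutoff that vanishes below `δ` and equals `1` above `2δ`: the squared
error is small on `[2δ,1]` and bounded on the short interval `(0,2δ]`.
-/

open Set
open scoped ContDiff

theorem setIntegral_le_mul_measureReal {α : Type*} [MeasurableSpace α] {μ : Measure α}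
    {f : α → ℝ} {s : Set α} {B : ℝ} (hs : μ s < ⊤) (hf0 : ∀ x ∈ s, 0 ≤ f x)
    (hB : ∀ x ∈ s, f x ≤ B) : ∫ x in s, f x ∂μ ≤ B * μ.real s :=
  (le_abs_self _).trans (norm_setIntegral_le_of_norm_le_const hs fun x hx => by
    rw [Real.norm_of_nonneg (hf0 x hx)]; exact hB x hx)

theorem setIntegral_Ioo_le_add_of_le_of_le {e : ℝ → ℝ} {a b c C η : ℝ} (hab : a ≤ b) (hbc : b < c)
    (he : ContinuousOn e (Ioc a c)) (he0 : ∀ x ∈ Ioc a c, 0 ≤ e x) (hC : ∀ x ∈ Ioc a c, e x ≤ C)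
    (hη : ∀ x ∈ Ioo b c, e x ≤ η) : ∫ x in Ioo a c, e x ≤ C * (b - a) + η * (c - b) := by
  have hint : IntegrableOn e (Ioc a c) :=
    ⟨he.aestronglyMeasurable measurableSet_Ioc, HasFiniteIntegral.restrict_of_bounded C
      measure_Ioc_lt_top ((ae_restrict_iff' measurableSet_Ioc).2 (.of_forall fun x hx => by
        rw [Real.norm_of_nonneg (he0 x hx)]; exact hC x hx))⟩
  have hleft : Ioc a b ⊆ Ioc a c := Ioc_subset_Ioc_right hbc.le
  have hright : Ioo b c ⊆ Ioc a c := Ioo_subset_Ioc_self.trans (Ioc_subset_Ioc_left hab)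
  rw [← Ioc_union_Ioo_eq_Ioo hab hbc, setIntegral_union
    ((Ioc_disjoint_Ioc_of_le le_rfl).mono_right Ioo_subset_Ioc_self) measurableSet_Ioo
    (hint.mono_set hleft) (hint.mono_set hright), ← Real.volume_real_Ioc_of_le hab,
    ← Real.volume_real_Ioo_of_le hbc.le]
  exact add_le_add
    (setIntegral_le_mul_measureReal measure_Ioc_lt_top (fun x hx => he0 x (hleft hx))
      fun x hx => hC x (hleft hx))
    (setIntegral_le_mul_measureReal measure_Ioo_lt_top (fun x hx => he0 x (hright hx)) hη)

section
variable {F : Type*} [NormedAddCommGroup F] [NormedSpace ℝ F]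

theorem ContinuousOn.exists_contDiff_dist_lt_on_Icc [CompleteSpace F] {f : ℝ → F} {a b ε : ℝ}
    (hab : a ≤ b) (hf : ContinuousOn f (Icc a b)) (hε : 0 < ε) :
    ∃ g : ℝ → F, ContDiff ℝ ∞ g ∧ ∀ x ∈ Icc a b, dist (g x) (f x) < ε := by
  have hext : UniformContinuous (IccExtend hab ((Icc a b).domRestrict f)) :=
    (CompactSpace.uniformContinuous_of_continuous hf.domRestrict).comp
      (LipschitzWith.projIcc hab).uniformContinuous
  obtain ⟨g, hg, hgf⟩ := hext.exists_contDiff_dist_le hε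
  exact ⟨g, hg, fun x hx => by simpa [IccExtend_of_mem _ _ hx, Set.domRestrict] using hgf x⟩

noncomputable def cutoffBelow (δ : ℝ) (q : ℝ → F) (x : ℝ) : F :=
  Real.smoothTransition (x / δ - 1) • q x

variable {δ x : ℝ} {q : ℝ → F}

theorem ContDiff.cutoffBelow (hq : ContDiff ℝ ∞ q) (δ : ℝ) : ContDiff ℝ ∞ (cutoffBelow δ q) :=
  (Real.smoothTransition.contDiff.comp ((contDiff_id.div_const δ).sub contDiff_const)).smul hq

theorem cutoffBelow_of_le (hδ : 0 < δ) (hx : x ≤ δ) : cutoffBelow δ q x = 0 := by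
  rw [cutoffBelow, Real.smoothTransition.zero_of_nonpos, zero_smul]
  rwa [sub_nonpos, div_le_one hδ]

theorem cutoffBelow_of_two_mul_le (hδ : 0 < δ) (hx : 2 * δ ≤ x) : cutoffBelow δ q x = q x := by
  rw [cutoffBelow, Real.smoothTransition.one_of_one_le, one_smul]
  rw [le_sub_iff_add_le, one_add_one_eq_two, le_div_iff₀ hδ]
  exact hx

theorem norm_cutoffBelow_le : ‖cutoffBelow δ q x‖ ≤ ‖q x‖ := by
  rw [cutoffBelow, norm_smul, Real.norm_of_nonneg (Real.smoothTransition.nonneg _)]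
  exact mul_le_of_le_one_left (norm_nonneg _) (Real.smoothTransition.le_one _)

theorem exists_contDiff_eq_zero_near_zero_integral_norm_sub_sq_lt [CompleteSpace F]
    {h : ℝ → F} {M ε : ℝ} (hh : ContinuousOn h (Ioc 0 1))
    (hM : ∀ x ∈ Ioc 0 1, ‖h x‖ ≤ M) (hε : 0 < ε) :
    ∃ k : ℝ → F, ContDiff ℝ ∞ k ∧ (∃ δ, 0 < δ ∧ ∀ x ≤ δ, k x = 0) ∧
      ∫ x in Ioo 0 1, ‖h x - k x‖ ^ 2 < ε := by
  set η := min 1 (ε / 4)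
  set C := (2 * M + 1) ^ 2
  set δ := min (1 / 4) (ε / (8 * (C + 1)))
  have hM0 : 0 ≤ M := (norm_nonneg _).trans (hM 1 ⟨one_pos, le_rfl⟩)
  have hη : 0 < η := lt_min one_pos (by positivity)
  have hδ : 0 < δ := lt_min (by norm_num) (by positivity)
  have hδ4 : δ ≤ 1 / 4 := min_le_left _ _
  have hδC : (C + 1) * δ ≤ ε / 8 := by
    have := min_le_right (1 / 4) (ε / (8 * (C + 1)))
    rw [le_div_iff₀ (by positivity)] at this
    linarith
  obtain ⟨q, hq, hqh⟩ := (hh.mono (Icc_subset_Ioc hδ le_rfl)).exists_contDiff_dist_lt_on_Icc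
    (by linarith) hη
  refine ⟨cutoffBelow δ q, hq.cutoffBelow δ, ⟨δ, hδ, fun x hx => cutoffBelow_of_le hδ hx⟩, ?_⟩
  have hk : ∀ x ∈ Ioc 0 1, ‖cutoffBelow δ q x‖ ≤ M + 1 := by
    intro x hx
    rcases le_or_gt x δ with hxδ | hδx
    · rw [cutoffBelow_of_le hδ hxδ, norm_zero]; linarith
    · have := hqh x ⟨hδx.le, hx.2⟩
      rw [dist_eq_norm] at this
      linarith [norm_cutoffBelow_le (δ := δ) (q := q) (x := x),
        norm_le_norm_add_norm_sub' (q x) (h x), hM x hx, min_le_left 1 (ε / 4)]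
  have hfar : ∀ x ∈ Ioc 0 1, ‖h x - cutoffBelow δ q x‖ ^ 2 ≤ C := fun x hx =>
    pow_le_pow_left₀ (norm_nonneg _) ((norm_sub_le _ _).trans (by linarith [hM x hx, hk x hx])) 2
  have hnear : ∀ x ∈ Ioo (2 * δ) 1, ‖h x - cutoffBelow δ q x‖ ^ 2 ≤ ε / 4 := by
    intro x hx
    have hqx := hqh x ⟨by linarith [hx.1], hx.2.le⟩
    rw [cutoffBelow_of_two_mul_le hδ hx.1.le, ← dist_eq_norm, dist_comm]
    calc dist (q x) (h x) ^ 2 ≤ η ^ 2 := pow_le_pow_left₀ dist_nonneg hqx.le 2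
      _ ≤ η := pow_le_of_le_one hη.le (min_le_left _ _) two_ne_zero
      _ ≤ ε / 4 := min_le_right _ _
  have hsplit := setIntegral_Ioo_le_add_of_le_of_le
    (e := fun x => ‖h x - cutoffBelow δ q x‖ ^ 2) (by positivity) (by linarith)
    ((hh.sub (hq.cutoffBelow δ).continuous.continuousOn).norm.pow 2) (fun _ _ => by positivity)
    hfar hnear
  have hC0 : 0 ≤ C := by positivity
  nlinarith

theorem ContDiffOn.exists_norm_le_mul_sub_of_eq_zero {f : ℝ → F} {a b : ℝ} (hab : a < b)
    (hf : ContDiffOn ℝ 1 f (Icc a b))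
    (ha : f a = 0) : ∃ L, ∀ x ∈ Icc a b, ‖f x‖ ≤ L * (x - a) := by
  obtain ⟨L, hL⟩ := isCompact_Icc.exists_bound_of_continuousOn
    (hf.continuousOn_derivWithin (uniqueDiffOn_Icc hab) le_rfl)
  refine ⟨L, fun x hx => ?_⟩
  have := (convex_Icc a b).norm_image_sub_le_of_norm_derivWithin_le
    (hf.differentiableOn one_ne_zero) hL (left_mem_Icc.2 hab.le) hx
  rwa [ha, sub_zero, Real.norm_of_nonneg (sub_nonneg.2 hx.1)] at this

theorem exists_contDiff_deriv_eq_of_eq_zero_of_le [CompleteSpace F] {g : ℝ → F}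
    (hg : ContDiff ℝ ∞ g) (hg0 : ∀ x ≤ δ, g x = 0) :
    ∃ v : ℝ → F, ContDiff ℝ ∞ v ∧ (∀ x ≤ δ, v x = 0) ∧ deriv v = g := by
  have hv : ∀ x, HasDerivAt (fun x => ∫ t in δ..x, g t) (g x) x := fun x =>
    (hg.continuous.integral_hasStrictDerivAt δ x).hasDerivAt
  have hderiv : deriv (fun x => ∫ t in δ..x, g t) = g := funext fun x => (hv x).deriv
  refine ⟨fun x => ∫ t in δ..x, g t, contDiff_infty_iff_deriv.2
    ⟨fun x => (hv x).differentiableAt, by rwa [hderiv]⟩, fun x hx => ?_, hderiv⟩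
  dsimp only
  rw [intervalIntegral.integral_symm, intervalIntegral.integral_congr (g := 0) fun t ht => ?_]
  · simp
  · rw [uIcc_of_le hx] at ht
    exact hg0 t ht.2

end

theorem dI_of_mem_Ioo (f : ℝ → ℂ) {ρ : ℝ} (hρ : ρ ∈ Ioo 0 1) : dI f ρ = deriv f ρ :=
  derivWithin_of_mem_nhds (Icc_mem_nhds hρ.1 hρ.2)

theorem exists_contDiffOn_eq_zero_near_zero_setIntegral_sq_dI_sub_lt (u : ℝ → ℂ)
    (hu : ContDiffOn ℝ 1 u (Icc 0 1)) {ε : ℝ} (hε : 0 < ε) :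
    ∃ v : ℝ → ℂ, ContDiffOn ℝ (⊤ : ℕ∞) v (Icc 0 1) ∧ (∃ δ, 0 < δ ∧ ∀ ρ ∈ Icc 0 δ, v ρ = 0) ∧
      ∫ ρ in Ioo 0 1, ‖dI u ρ - dI v ρ‖ ^ 2 < ε := by
  have hdu : ContinuousOn (dI u) (Icc 0 1) :=
    hu.continuousOn_derivWithin (uniqueDiffOn_Icc zero_lt_one) le_rfl
  obtain ⟨M, hM⟩ := isCompact_Icc.exists_bound_of_continuousOn hdu
  obtain ⟨g, hg, ⟨δ, hδ, hg0⟩, hgu⟩ := exists_contDiff_eq_zero_near_zero_integral_norm_sub_sq_lt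
    (hdu.mono Ioc_subset_Icc_self) (fun x hx => hM x (Ioc_subset_Icc_self hx)) hε
  obtain ⟨v, hv, hv0, hdv⟩ := exists_contDiff_deriv_eq_of_eq_zero_of_le hg hg0
  refine ⟨v, hv.contDiffOn, ⟨δ, hδ, fun ρ hρ => hv0 ρ hρ.2⟩, ?_⟩
  refine (setIntegral_congr_fun measurableSet_Ioo fun ρ hρ => ?_).trans_lt hgu
  rw [dI_of_mem_Ioo v hρ, hdv]

theorem exists_contDiffOn_eq_zero_near_zero_setIntegral_sq_dI_sub_div_sq_lt (u : ℝ → ℂ)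
    (hu : ContDiffOn ℝ 2 u (Icc 0 1)) (hu0 : dI u 0 = 0) {ε : ℝ} (hε : 0 < ε) :
    ∃ v : ℝ → ℂ, ContDiffOn ℝ (⊤ : ℕ∞) v (Icc 0 1) ∧ (∃ δ, 0 < δ ∧ ∀ ρ ∈ Icc 0 δ, v ρ = 0) ∧
      ∫ ρ in Ioo 0 1, ‖dI u ρ - dI v ρ‖ ^ 2 / ρ ^ 2 < ε := by
  have hdu : ContDiffOn ℝ 1 (dI u) (Icc 0 1) :=
    hu.derivWithin (uniqueDiffOn_Icc zero_lt_one) (by norm_num)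
  obtain ⟨L, hL⟩ := hdu.exists_norm_le_mul_sub_of_eq_zero zero_lt_one hu0
  have hcont : ContinuousOn (fun ρ : ℝ => ρ⁻¹ • dI u ρ) (Ioc 0 1) :=
    (continuousOn_inv₀.mono fun ρ hρ => hρ.1.ne').smul (hdu.continuousOn.mono Ioc_subset_Icc_self)
  have hbound : ∀ ρ ∈ Ioc (0 : ℝ) 1, ‖ρ⁻¹ • dI u ρ‖ ≤ L := fun ρ hρ => by
    have := hL ρ (Ioc_subset_Icc_self hρ)
    rw [norm_smul, norm_inv, Real.norm_of_nonneg hρ.1.le, inv_mul_le_iff₀ hρ.1]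
    linarith
  obtain ⟨k, hk, ⟨δ, hδ, hk0⟩, hku⟩ :=
    exists_contDiff_eq_zero_near_zero_integral_norm_sub_sq_lt hcont hbound hε
  obtain ⟨v, hv, hv0, hdv⟩ := exists_contDiff_deriv_eq_of_eq_zero_of_le
    (g := fun ρ => ρ • k ρ) (contDiff_id.smul hk)
    fun ρ hρ => by simp [hk0 ρ hρ]
  refine ⟨v, hv.contDiffOn, ⟨δ, hδ, fun ρ hρ => hv0 ρ hρ.2⟩, ?_⟩
  refine (setIntegral_congr_fun measurableSet_Ioo fun ρ hρ => ?_).trans_lt hku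
  have hρ0 : ρ ≠ 0 := hρ.1.ne'
  have hfactor : dI u ρ - ρ • k ρ = ρ • (ρ⁻¹ • dI u ρ - k ρ) := by
    rw [smul_sub, smul_inv_smul₀ hρ0]
  rw [dI_of_mem_Ioo v hρ, congrFun hdv ρ, hfactor, norm_smul, mul_pow, Real.norm_eq_abs,
    sq_abs, mul_div_cancel_left₀ _ (pow_ne_zero 2 hρ0)]

theorem stmt_5 :
    (∀ u : ℝ → ℂ, ContDiffOn ℝ 2 u (Set.Icc 0 1) → u 0 = 0 → dI u 0 = 0 →
      ∀ ε : ℝ, 0 < ε →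
      ∃ v : ℝ → ℂ, ContDiffOn ℝ (⊤ : ℕ∞) v (Set.Icc 0 1) ∧
        (∃ δ : ℝ, 0 < δ ∧ ∀ ρ ∈ Set.Icc (0:ℝ) δ, v ρ = 0) ∧
        (∫ ρ in Set.Ioo (0:ℝ) 1, ‖dI u ρ - dI v ρ‖ ^ 2 / ρ ^ 2) < ε ^ 2) ∧
    (∀ u : ℝ → ℂ, ContDiffOn ℝ 1 u (Set.Icc 0 1) → u 0 = 0 →
      ∀ ε : ℝ, 0 < ε →
      ∃ v : ℝ → ℂ, ContDiffOn ℝ (⊤ : ℕ∞) v (Set.Icc 0 1) ∧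
        (∃ δ : ℝ, 0 < δ ∧ ∀ ρ ∈ Set.Icc (0:ℝ) δ, v ρ = 0) ∧
        (∫ ρ in Set.Ioo (0:ℝ) 1, ‖dI u ρ - dI v ρ‖ ^ 2) < ε ^ 2) :=
  ⟨fun u hu _ hu0 _ hε =>
    exists_contDiffOn_eq_zero_near_zero_setIntegral_sq_dI_sub_div_sq_lt u hu hu0 (pow_pos hε 2),
   fun u hu _ _ hε =>
    exists_contDiffOn_eq_zero_near_zero_setIntegral_sq_dI_sub_lt u hu (pow_pos hε 2)⟩
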